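/- arXiv:1302.0587 — 2 statements merged into one kernel-verified Lean document; each statement's English description precedes it below -/
import Mathlib

section
/- For every sequence ε : ℕ → {0,1} and every n ≥ 0, d(p(n+1), −q'_ε(n+1)) = d(p(n), −q'_ε(n)) + 2·(−1)^{ε(n)}. (Equivalently, in terms of the knots K(n,i) this says d(K(n+1, i)) = d(K(n, i)) + 2·(−1)^{ε(n)+1}, since d(K(n,i)) = −d(p(n), −q'_ε(n)).) -/
/-- For integers `p > q > 0`, the diagonal element `d(p, q)` of the linking matrix of the
dihedral covering link of the 2-bridge knot `b(p,q)`: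
`d(p, q) = −∑_{k=1}^{p−1} (−1)^{⌊q·k/p⌋}`. -/
noncomputable def diagElem (p q : ℤ) : ℤ :=
  -∑ k ∈ Finset.Icc (1 : ℤ) (p - 1), ((⌊(q : ℚ) * (k : ℚ) / (p : ℚ)⌋).negOnePow : ℤ)

/-- `p(0) = 3`, `p(n+1) = p(n)·(4·p(n)² − 1)`. -/
def pSeq : ℕ → ℤ
  | 0 => 3
  | n + 1 => pSeq n * (4 * (pSeq n) ^ 2 - 1)

/-- `q'_ε(0) = −1`, `q'_ε(n+1) = q'_ε(n)·(4·p(n)² − 1) + 2·(−1)^{ε(n)+1}·p(n)`. -/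
def q'Seq (ε : ℕ → ℕ) : ℕ → ℤ
  | 0 => -1
  | n + 1 => q'Seq ε n * (4 * (pSeq n) ^ 2 - 1) + 2 * (-1 : ℤ) ^ (ε n + 1) * pSeq n

/-!
Write `d(p, q) = 1 - ∑_{0 ≤ k < p} (-1)^⌊qk/p⌋` and put `M = 4P² - 1`. For the sign `s = 1`, split
`k = Mc + b` with `0 ≤ c < P`, `0 ≤ b < M`, and `b = 2Pj + i` with `0 ≤ i, j < 2P`. Since
`2Pb = Mj + (j + 2Pi)` with `0 ≤ j + 2Pi < M`, the quotient `⌊(QM + 2P)k / PM⌋` has the parity of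
`⌊(Q(i - c) + j) / P⌋`. Summed over the whole square `0 ≤ i, j < 2P` this sign vanishes, as shifting
`j` by `P` flips it; the square exceeds `0 ≤ b < M` only by the corner `i = j = 2P - 1`, and the
corner signs summed over `c` give `d(P, Q) + 1`. The sign `s = -1` reduces to `s = 1` through
`d(p, -q) = -d(p, q)`.
-/

open Finset

theorem Int.sum_Ico_mul_eq_sum_sum {β : Type*} [AddCommMonoid β] (f : ℤ → β) (m : ℤ) {n : ℤ}
    (hn : 0 < n) :
    ∑ k ∈ Ico 0 (m * n), f k = ∑ c ∈ Ico 0 m, ∑ b ∈ Ico 0 n, f (n * c + b) := by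
  rw [← sum_product']
  refine sum_nbij' (fun k => (k / n, k % n)) (fun z => n * z.1 + z.2) ?_ ?_ ?_ ?_ ?_
  · intro k hk
    simp only [mem_Ico, mem_product] at hk ⊢
    refine ⟨⟨Int.ediv_nonneg hk.1 hn.le, (Int.ediv_lt_iff_lt_mul hn).2 hk.2⟩,
      Int.emod_nonneg _ hn.ne', Int.emod_lt_of_pos _ hn⟩
  · rintro ⟨c, b⟩ hz
    simp only [mem_Ico, mem_product] at hz ⊢
    constructor <;> nlinarith
  · intro k _
    exact Int.mul_ediv_add_emod k n
  · rintro ⟨c, b⟩ hz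
    simp only [mem_Ico, mem_product] at hz
    obtain ⟨hq, hr⟩ := (Int.ediv_emod_unique (a := n * c + b) hn).2 ⟨add_comm _ _, hz.2⟩
    rw [hq, hr]
  · intro k _
    rw [Int.mul_ediv_add_emod]

theorem Int.sum_Ico_two_mul_negOnePow_ediv (a : ℤ) {P : ℤ} (hP : 0 < P) :
    ∑ j ∈ Ico 0 (2 * P), (((a + j) / P).negOnePow : ℤ) = 0 := by
  have hshift (b : ℤ) : (a + (P * 1 + b)) / P = (a + b) / P + 1 := by
    rw [← Int.add_mul_ediv_right _ _ hP.ne']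
    congr 1
    ring
  rw [Int.sum_Ico_mul_eq_sum_sum _ _ hP, show Ico (0 : ℤ) 2 = {0, 1} by rfl,
    sum_pair zero_ne_one]
  simp only [hshift, Int.negOnePow_succ, Units.val_neg, sum_neg_distrib, mul_zero, zero_add]
  ring

theorem Int.neg_sub_one_ediv_of_not_dvd {a b : ℤ} (hb : 0 < b) (h : ¬ b ∣ a) :
    (-a - 1) / b = -(a / b) - 1 := by
  have hr : 0 < a % b := (Int.emod_pos_of_not_dvd h).resolve_left hb.ne'
  refine ((Int.ediv_emod_unique (r := b - 1 - a % b) hb).2 ⟨?_, ?_, ?_⟩).1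
  · linear_combination -Int.mul_ediv_add_emod a b
  · linarith [Int.emod_lt_of_pos a hb]
  · linarith

theorem Int.negOnePow_neg_sub_one (n : ℤ) : (-n - 1).negOnePow = -n.negOnePow := by
  rw [Int.negOnePow_sub, Int.negOnePow_neg, Int.negOnePow_one, mul_neg_one]

theorem IsCoprime.not_dvd_mul_of_mem_Ico {p q k : ℤ} (h : IsCoprime p q) (hk : k ∈ Ico 1 p) :
    ¬ p ∣ q * k := fun hdvd => by
  rw [mem_Ico] at hk
  have := Int.le_of_dvd (by omega) (h.dvd_of_dvd_mul_left hdvd)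
  omega

theorem IsCoprime.mul_step {P Q s : ℤ} (hPQ : IsCoprime P Q) (hs : s = 1 ∨ s = -1) :
    IsCoprime (P * (4 * P ^ 2 - 1)) (Q * (4 * P ^ 2 - 1) + 2 * s * P) := by
  have hs2 : s ^ 2 = 1 := by rcases hs with rfl | rfl <;> norm_num
  have hP : IsCoprime P (Q * (4 * P ^ 2 - 1) + P * (2 * s)) :=
    (hPQ.mul_right ⟨4 * P, -1, by ring⟩).add_mul_left_right _
  rw [show 2 * s * P = P * (2 * s) by ring]
  refine hP.mul_left ⟨-1 - 2 * s * P * Q, 2 * s * P, ?_⟩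
  linear_combination 4 * P ^ 2 * hs2

theorem diagElem_eq_neg_sum_ediv {p : ℤ} (hp : 0 < p) (q : ℤ) :
    diagElem p q = -∑ k ∈ Ico 1 p, ((q * k / p).negOnePow : ℤ) := by
  lift p to ℕ using hp.le
  rw [diagElem, Icc_sub_one_right_eq_Ico]
  congr 1
  refine sum_congr rfl fun k _ => ?_
  rw [← Int.cast_mul, Int.cast_natCast, Rat.floor_intCast_div_natCast]

theorem diagElem_eq_one_sub_sum_Ico_zero {p : ℤ} (hp : 0 < p) (q : ℤ) :
    diagElem p q = 1 - ∑ k ∈ Ico 0 p, ((q * k / p).negOnePow : ℤ) := by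
  rw [diagElem_eq_neg_sum_ediv hp, ← insert_Ico_add_one_left_eq_Ico hp, zero_add,
    sum_insert (by simp)]
  simp

theorem diagElem_neg_right {p q : ℤ} (hp : 0 < p) (hpq : IsCoprime p q) :
    diagElem p (-q) = -diagElem p q := by
  simp only [diagElem_eq_neg_sum_ediv hp, neg_neg, ← sum_neg_distrib]
  refine sum_congr rfl fun k hk => ?_
  rw [neg_mul, Int.neg_ediv, if_neg (hpq.not_dvd_mul_of_mem_Ico hk), Int.sign_eq_one_of_pos hp,
    Int.negOnePow_neg_sub_one, Units.val_neg, neg_neg]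

theorem sum_negOnePow_corner {P Q : ℤ} (hP : 0 < P) (hQ : Odd Q) (hPQ : IsCoprime P Q) :
    ∑ c ∈ Ico 0 P, (((Q * (2 * P - 1 - c) + (2 * P - 1)) / P).negOnePow : ℤ) =
      diagElem P Q + 1 := by
  have hshift (c : ℤ) :
      (Q * (2 * P - 1 - c) + (2 * P - 1)) / P = (-(Q * (c + 1)) - 1) / P + 2 * (Q + 1) := by
    rw [← Int.add_mul_ediv_right _ _ hP.ne']
    congr 1
    ring
  have hlast : (-(Q * P) - 1) / P = -Q - 1 :=
    ((Int.ediv_emod_unique (r := P - 1) hP).2 ⟨by ring, by omega, by omega⟩).1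
  have hQ1 : Even (-Q - 1) := by simpa using hQ.neg.sub_odd odd_one
  simp only [hshift, Int.negOnePow_add, Int.negOnePow_two_mul, mul_one]
  rw [sum_Ico_add' (fun y => (((-(Q * y) - 1) / P).negOnePow : ℤ)), zero_add,
    ← insert_Ico_right_eq_Ico_add_one (by omega), sum_insert (by simp),
    diagElem_eq_neg_sum_ediv hP, hlast, Int.negOnePow_even _ hQ1,
    add_comm, Units.val_one, ← sum_neg_distrib]
  congr 1
  refine sum_congr rfl fun y hy => ?_
  rw [Int.neg_sub_one_ediv_of_not_dvd hP (hPQ.not_dvd_mul_of_mem_Ico hy),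
    Int.negOnePow_neg_sub_one, Units.val_neg]

theorem step_mul_ediv_eq {P M Q c i j : ℤ} (hP : 0 < P) (hM : M = 4 * P ^ 2 - 1) (hi : 0 ≤ i)
    (hj : 0 ≤ j) (hij : j + 2 * P * i < M) :
    (Q * M + 2 * P) * (M * c + (2 * P * j + i)) / (P * M) =
      2 * (2 * P * Q * c + Q * j + c) + (Q * (i - c) + j) / P := by
  set u := Q * (i - c) + j
  have hM0 : 0 < M := by nlinarith
  have hr0 : 0 ≤ M * (u % P) := mul_nonneg hM0.le (Int.emod_nonneg _ hP.ne')
  have hrP : M * (u % P) ≤ M * (P - 1) :=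
    mul_le_mul_of_nonneg_left (by linarith [Int.emod_lt_of_pos u hP]) hM0.le
  refine ((Int.ediv_emod_unique (r := M * (u % P) + (j + 2 * P * i)) (by positivity)).2
    ⟨?_, by positivity, by linarith⟩).1
  linear_combination (-(Q * M * c) + j) * hM + M * Int.mul_ediv_add_emod u P

theorem negOnePow_step_mul_ediv {P M Q c b : ℤ} (hP : 0 < P) (hM : M = 4 * P ^ 2 - 1)
    (hb : b ∈ Ico 0 M) :
    ((Q * M + 2 * P) * (M * c + b) / (P * M)).negOnePow =
      ((Q * (b % (2 * P) - c) + b / (2 * P)) / P).negOnePow := by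
  rw [mem_Ico] at hb
  have h2P : 0 < 2 * P := by omega
  set i := b % (2 * P)
  set j := b / (2 * P)
  have hb_eq : b = 2 * P * j + i := (Int.mul_ediv_add_emod b (2 * P)).symm
  have hi0 : 0 ≤ i := Int.emod_nonneg _ h2P.ne'
  have hi : i < 2 * P := Int.emod_lt_of_pos _ h2P
  have hj0 : 0 ≤ j := Int.ediv_nonneg hb.1 h2P.le
  have hj : j < 2 * P := by nlinarith
  have hij : j + 2 * P * i < M := by
    rcases lt_or_eq_of_le (show i ≤ 2 * P - 1 by omega) with hi' | hi'
    · nlinarith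
    · rw [hi'] at hb_eq ⊢
      nlinarith
  rw [hb_eq, step_mul_ediv_eq hP hM hi0 hj0 hij, Int.negOnePow_add, Int.negOnePow_two_mul, one_mul]

theorem sum_negOnePow_step_mul_ediv {P M Q c : ℤ} (hP : 0 < P) (hM : M = 4 * P ^ 2 - 1) :
    ∑ b ∈ Ico 0 M, (((Q * M + 2 * P) * (M * c + b) / (P * M)).negOnePow : ℤ) =
      -(((Q * (2 * P - 1 - c) + (2 * P - 1)) / P).negOnePow : ℤ) := by
  have h2P : 0 < 2 * P := by omega
  set F : ℤ → ℤ := fun b => ((Q * (b % (2 * P) - c) + b / (2 * P)) / P).negOnePow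
  have hF (i j : ℤ) (hi : i ∈ Ico 0 (2 * P)) :
      F (2 * P * j + i) = ((Q * (i - c) + j) / P).negOnePow := by
    obtain ⟨hq, hr⟩ := (Int.ediv_emod_unique (a := 2 * P * j + i) h2P).2
      ⟨add_comm _ _, (mem_Ico.1 hi)⟩
    simp only [F, hq, hr]
  have hM' : 2 * P * (2 * P) = M + 1 := by rw [hM]; ring
  calc ∑ b ∈ Ico 0 M, (((Q * M + 2 * P) * (M * c + b) / (P * M)).negOnePow : ℤ)
      = ∑ b ∈ Ico 0 M, F b :=
        sum_congr rfl fun b hb => congrArg Units.val (negOnePow_step_mul_ediv hP hM hb)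
    _ = ∑ b ∈ Ico 0 (2 * P * (2 * P)), F b - F M := by
        rw [hM', ← insert_Ico_right_eq_Ico_add_one (by nlinarith), sum_insert (by simp)]
        ring
    _ = -F M := by
        rw [Int.sum_Ico_mul_eq_sum_sum _ _ h2P, sum_comm]
        simp only [sum_congr rfl fun i hi => sum_congr rfl fun j _ => hF i j hi,
          Int.sum_Ico_two_mul_negOnePow_ediv _ hP, sum_const_zero, zero_sub]
    _ = _ := by
        rw [show M = 2 * P * (2 * P - 1) + (2 * P - 1) by rw [hM]; ring, hF _ _ (mem_Ico.2 ⟨by omega, by omega⟩)]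

theorem diagElem_step_one {P Q : ℤ} (hP : 0 < P) (hQ : Odd Q) (hPQ : IsCoprime P Q) :
    diagElem (P * (4 * P ^ 2 - 1)) (Q * (4 * P ^ 2 - 1) + 2 * P) = diagElem P Q + 2 := by
  set M := 4 * P ^ 2 - 1 with hM
  have hM0 : 0 < M := by nlinarith
  rw [diagElem_eq_one_sub_sum_Ico_zero (mul_pos hP hM0), Int.sum_Ico_mul_eq_sum_sum _ _ hM0]
  simp only [sum_negOnePow_step_mul_ediv hP hM, sum_neg_distrib, sum_negOnePow_corner hP hQ hPQ]
  ring

theorem diagElem_step {P Q s : ℤ} (hP : 0 < P) (hQ : Odd Q) (hPQ : IsCoprime P Q)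
    (hs : s = 1 ∨ s = -1) :
    diagElem (P * (4 * P ^ 2 - 1)) (Q * (4 * P ^ 2 - 1) + 2 * s * P) = diagElem P Q + 2 * s := by
  rcases hs with rfl | rfl
  · simpa using diagElem_step_one hP hQ hPQ
  · have hPM : 0 < P * (4 * P ^ 2 - 1) := mul_pos hP (by nlinarith)
    rw [show Q * (4 * P ^ 2 - 1) + 2 * -1 * P = -(-Q * (4 * P ^ 2 - 1) + 2 * P) by ring,
      diagElem_neg_right hPM (by simpa using hPQ.neg_right.mul_step (Or.inl rfl)),
      diagElem_step_one hP hQ.neg hPQ.neg_right, diagElem_neg_right hP hPQ]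
    ring

theorem pSeq_pos (n : ℕ) : 0 < pSeq n := by
  induction n with
  | zero => decide
  | succ n ih => exact mul_pos ih (by nlinarith)

theorem neg_q'Seq_succ (ε : ℕ → ℕ) (n : ℕ) :
    -q'Seq ε (n + 1) = -q'Seq ε n * (4 * pSeq n ^ 2 - 1) + 2 * (-1) ^ ε n * pSeq n := by
  rw [q'Seq, pow_succ]
  ring

theorem odd_neg_q'Seq (ε : ℕ → ℕ) (n : ℕ) : Odd (-q'Seq ε n) := by
  induction n with
  | zero => exact odd_one
  | succ n ih =>
    rw [neg_q'Seq_succ]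
    exact (ih.mul ⟨2 * pSeq n ^ 2 - 1, by ring⟩).add_even ⟨(-1) ^ ε n * pSeq n, by ring⟩

theorem isCoprime_pSeq_neg_q'Seq (ε : ℕ → ℕ) (n : ℕ) : IsCoprime (pSeq n) (-q'Seq ε n) := by
  induction n with
  | zero => exact isCoprime_one_right
  | succ n ih =>
    rw [neg_q'Seq_succ]
    exact ih.mul_step (neg_one_pow_eq_or ℤ (ε n))

theorem diagElem_recursion_general (ε : ℕ → ℕ) (n : ℕ) :
    diagElem (pSeq (n + 1)) (-(q'Seq ε (n + 1))) =
      diagElem (pSeq n) (-(q'Seq ε n)) + 2 * (-1 : ℤ) ^ (ε n) := by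
  rw [neg_q'Seq_succ]
  exact diagElem_step (pSeq_pos n) (odd_neg_q'Seq ε n) (isCoprime_pSeq_neg_q'Seq ε n)
    (neg_one_pow_eq_or ℤ (ε n))

/-- For every sequence `ε : ℕ → {0,1}` and every `n ≥ 0`,
`d(p(n+1), −q'_ε(n+1)) = d(p(n), −q'_ε(n)) + 2·(−1)^{ε(n)}`. -/
theorem diagElem_recursion (ε : ℕ → ℕ) (hε : ∀ j, ε j = 0 ∨ ε j = 1) (n : ℕ) :
    diagElem (pSeq (n + 1)) (-(q'Seq ε (n + 1))) =
      diagElem (pSeq n) (-(q'Seq ε n)) + 2 * (-1 : ℤ) ^ (ε n) :=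
  diagElem_recursion_general ε n
end

section
/- For every n ≥ 0 and every sequence ε : ℕ → {0,1}, d(p(n), −q'_ε(n)) = −2 + 2·#{j : 0 ≤ j < n, ε(j) = 0} − 2·#{j : 0 ≤ j < n, ε(j) = 1}; in particular d(p(n), −q'_ε(n)) = 2n − 2 − 4·#{j : 0 ≤ j < n, ε(j) = 1}, so the set of values of d(p(n), −q'_ε(n)) over all ε is {2n − 2 − 4j : j = 0, 1, …, n}. -/
/-!
Write `S(p, q) = ∑_{0 ≤ k < p} (-1)^⌊qk/p⌋`, so that `d(p, q) = 1 - S(p, q)`, and put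
`M = 4P² - 1`. For odd `Q` coprime to `P`, splitting `k = r + jP` (`0 ≤ r < P`, `0 ≤ j < M`)
writes `S(PM, QM + 2P)` as `∑_r (-1)^⌊Qr/P⌋ · V(m_r)`, where
`V(m) = ∑_{j<M} (-1)^(j + ⌊(m + 2Pj)/M⌋)` and, modulo `M`, `m_0 ≡ 0` while `m_r` is odd for
`r ≠ 0`. As `(2P)² ≡ 1 (mod M)`, multiplication by `2P` permutes `[0, M)` by exchanging the two
base-`2P` digits; in the new variable consecutive terms of `V(m)` cancel in pairs except the
last one, so `V(0) = -1` and `V(m) = 1` for odd `m`. Hence `S(PM, QM + 2P) = S(P, Q) - 2`, and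
the step with `-2P` follows from `S(p, q) + S(p, -q) = 2`. Starting from `S(3, 1) = 3`,
induction gives `S(p(n), -q'_ε(n)) = 3 - 2 ∑_{j<n} (-1)^ε(j)`.
-/

open Finset

theorem sum_Ico_eq_zero_of_succ_eq_neg {G : Type*} [AddCommGroup G] {f : ℤ → G} {a b : ℤ}
    (ha : Even a) (hb : Even b) (hf : ∀ w ∈ Ico a b, Even w → f (w + 1) = -f w) :
    ∑ w ∈ Ico a b, f w = 0 := by
  rw [Int.even_iff] at ha hb
  refine sum_involution (fun w _ => if Even w then w + 1 else w - 1) (fun w hw => ?_)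
    (fun w _ _ => by split_ifs <;> omega) (fun w hw => ?_) (fun w _ => ?_)
  · split_ifs with hw2
    · rw [hf w hw hw2, add_neg_cancel]
    · have hw1 : Even (w - 1) := by rw [Int.even_iff] at hw2 ⊢; omega
      have := hf (w - 1) (by simp only [mem_Ico] at hw ⊢; rw [Int.even_iff] at hw1; omega) hw1
      rw [sub_add_cancel] at this
      rw [this, neg_add_cancel]
  · simp only [mem_Ico, Int.even_iff] at hw ⊢; split_ifs <;> omega
  · simp only [Int.even_iff]; split_ifs <;> omega

theorem Int.add_one_ediv_of_not_dvd {x M : ℤ} (hM : 0 < M) (h : ¬ M ∣ x + 1) :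
    (x + 1) / M = x / M := by
  rw [Int.ediv_eq_iff_of_pos hM]
  have h1 := Int.ediv_mul_le x hM.ne'
  have h2 := Int.lt_ediv_add_one_mul_self x hM
  exact ⟨by linarith, lt_of_le_of_ne (by linarith) fun heq => h ⟨x / M + 1, by linarith⟩⟩

theorem not_dvd_add_add_one {M m w : ℤ} (hM : Odd M) (hm0 : 0 ≤ m) (hmM : m < M)
    (hm : m = 0 ∨ Odd m) (hw0 : 0 ≤ w) (hwM : w < M - 1) (hw : Even w) : ¬ M ∣ m + w + 1 := by
  rintro ⟨k, hk⟩
  rcases hm with rfl | hm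
  · have : 0 < k := by nlinarith
    have : k < 1 := by nlinarith
    omega
  · have hk1 : k = 1 := by
      have : 0 < k := by nlinarith
      have : k < 2 := by nlinarith
      omega
    rw [hk1, mul_one] at hk
    exact Int.not_even_iff_odd.2 hM (hk ▸ (hm.add_even hw).add_one)

theorem sum_Ico_mul_eq_sum_sum {G : Type*} [AddCommMonoid G] (f : ℤ → G) {P M : ℤ}
    (hP : 0 < P) :
    ∑ k ∈ Ico 0 (P * M), f k = ∑ r ∈ Ico 0 P, ∑ j ∈ Ico 0 M, f (r + j * P) := by
  rw [← sum_product']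
  refine sum_nbij' (fun k => (k % P, k / P)) (fun x => x.1 + x.2 * P) (fun k hk => ?_)
    (fun x hx => ?_) (fun k _ => ?_) (fun x hx => ?_) fun k _ => ?_
  · rw [mem_Ico] at hk
    simp only [mem_product, mem_Ico]
    exact ⟨⟨Int.emod_nonneg _ hP.ne', Int.emod_lt_of_pos _ hP⟩,
      Int.ediv_nonneg hk.1 hP.le, Int.ediv_lt_of_lt_mul hP (by linarith)⟩
  · simp only [mem_product, mem_Ico] at hx ⊢
    constructor <;> nlinarith
  · exact Int.emod_add_ediv_mul k P
  · simp only [mem_product, mem_Ico] at hx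
    rw [Int.add_mul_emod_self_right, Int.emod_eq_of_lt hx.1.1 hx.1.2,
      Int.add_mul_ediv_right _ _ hP.ne', Int.ediv_eq_zero_of_lt hx.1.1 hx.1.2, zero_add]
  · rw [Int.emod_add_ediv_mul]

noncomputable def altFloorSum (c M m : ℤ) : ℤ :=
  ∑ j ∈ Ico 0 M, ((j + (m + c * j) / M).negOnePow : ℤ)

theorem mul_ediv_eq_ediv_of_sq_eq_add_one {c M w : ℤ} (hc0 : 0 < c) (hcM : c ^ 2 = M + 1)
    (hw0 : 0 ≤ w) (hwM : w < M) : c * w / M = w / c := by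
  rw [Int.ediv_eq_iff_of_pos (by nlinarith)]
  have hdiv := Int.emod_add_ediv_mul w c
  have hu0 := Int.emod_nonneg w hc0.ne'
  have hu := Int.emod_lt_of_pos w hc0
  have hv0 : 0 ≤ w / c := Int.ediv_nonneg hw0 hc0.le
  have hv : w / c < c := Int.ediv_lt_of_lt_mul hc0 (by nlinarith)
  constructor
  · nlinarith
  · by_contra h
    nlinarith

theorem altFloorSum_eq_sum_digits {c M : ℤ} (hc : Even c) (hc0 : 0 < c) (hcM : c ^ 2 = M + 1)
    (m : ℤ) :
    altFloorSum c M m = ∑ w ∈ Ico 0 M, ((w + w / c + (m + w) / M).negOnePow : ℤ) := by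
  have hM : 0 < M := by
    have : 2 ≤ c := by obtain ⟨a, ha⟩ := hc; omega
    nlinarith
  have hmem : ∀ x, c * x % M ∈ Ico 0 M := fun x =>
    mem_Ico.2 ⟨Int.emod_nonneg _ hM.ne', Int.emod_lt_of_pos _ hM⟩
  have hinv : ∀ x ∈ Ico 0 M, c * (c * x % M) % M = x := by
    intro x hx
    rw [mem_Ico] at hx
    have : c * (c * x % M) ≡ x [ZMOD M] :=
      calc c * (c * x % M) ≡ c * (c * x) [ZMOD M] := (Int.mod_modEq _ _).mul_left _
        _ = x + M * x := by linear_combination x * hcM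
        _ ≡ x [ZMOD M] := Int.add_mul_emod_self_left x M x
    rw [this, Int.emod_eq_of_lt hx.1 hx.2]
  refine sum_nbij' (fun x => c * x % M) (fun x => c * x % M) (fun x _ => hmem x)
    (fun x _ => hmem x) hinv hinv fun x hx => ?_
  rw [mem_Ico] at hx
  obtain ⟨hw0, hwM⟩ := mem_Ico.1 (hmem x)
  set w := c * x % M
  set q := c * x / M
  have hcx : c * x = w + M * q := by linarith [Int.mul_ediv_add_emod (c * x) M]
  have hcw : c * w / M = x - c * q := by
    rw [show c * w = x + M * (x - c * q) by linear_combination -c * hcx + x * hcM,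
      Int.add_mul_ediv_left _ _ hM.ne', Int.ediv_eq_zero_of_lt hx.1 hx.2, zero_add]
  rw [mul_ediv_eq_ediv_of_sq_eq_add_one hc0 hcM hw0 hwM] at hcw
  rw [hcx, show m + (w + M * q) = m + w + M * q by ring, Int.add_mul_ediv_left _ _ hM.ne']
  congr 1
  rw [Int.negOnePow_eq_iff, show x + ((m + w) / M + q) - (w + w / c + (m + w) / M)
    = c * (c * q + q - x) by linear_combination -hcw + hcx - q * hcM]
  exact hc.mul_right _

theorem altFloorSum_eq_neg_negOnePow {c M m : ℤ} (hc : Even c) (hc0 : 0 < c)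
    (hcM : c ^ 2 = M + 1) (hm0 : 0 ≤ m) (hmM : m < M) (hm : m = 0 ∨ Odd m) :
    altFloorSum c M m = -(((m + M - 1) / M).negOnePow : ℤ) := by
  have hc2 : 2 ≤ c := by obtain ⟨a, ha⟩ := hc; omega
  have hM : 0 < M := by nlinarith
  have hMo : Odd M := by
    obtain ⟨a, rfl⟩ := hc
    exact ⟨2 * a ^ 2 - 1, by linear_combination -hcM⟩
  have hsucc : ∀ w ∈ Ico 0 (M - 1), Even w →
      (((w + 1) + (w + 1) / c + (m + (w + 1)) / M).negOnePow : ℤ)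
        = -((w + w / c + (m + w) / M).negOnePow : ℤ) := by
    intro w hw hwe
    rw [mem_Ico] at hw
    have hcw : (w + 1) / c = w / c :=
      Int.add_one_ediv_of_not_dvd hc0 fun h =>
        Int.not_even_iff_odd.2 hwe.add_one (even_iff_two_dvd.2 (hc.two_dvd.trans h))
    have hMw : (m + w + 1) / M = (m + w) / M :=
      Int.add_one_ediv_of_not_dvd hM (not_dvd_add_add_one hMo hm0 hmM hm hw.1 hw.2 hwe)
    rw [hcw, ← add_assoc, hMw, show w + 1 + w / c + (m + w) / M
      = w + w / c + (m + w) / M + 1 by ring, Int.negOnePow_succ, Units.val_neg]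
  have hlast : (M - 1) / c = c - 1 := by
    rw [Int.ediv_eq_iff_of_pos hc0]
    constructor <;> nlinarith
  rw [altFloorSum_eq_sum_digits hc hc0 hcM,
    show Ico 0 M = insert (M - 1) (Ico 0 (M - 1)) by ext; simp; omega,
    sum_insert (by simp), sum_Ico_eq_zero_of_succ_eq_neg (Int.even_iff.2 rfl) ?_ hsucc, add_zero,
    hlast, show m + (M - 1) = m + M - 1 by ring, Int.negOnePow_add, Units.val_mul,
    Int.negOnePow_odd _ ?_]
  · simp
  · obtain ⟨a, rfl⟩ := hc
    exact ⟨2 * a ^ 2 + a - 2, by linear_combination -hcM⟩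
  · simpa using hMo.sub_odd odd_one

theorem altFloorSum_zero {c M : ℤ} (hc : Even c) (hc0 : 0 < c) (hcM : c ^ 2 = M + 1) :
    altFloorSum c M 0 = -1 := by
  have hM : 0 < M := by nlinarith [show 2 ≤ c by obtain ⟨a, ha⟩ := hc; omega]
  rw [altFloorSum_eq_neg_negOnePow hc hc0 hcM le_rfl hM (Or.inl rfl),
    Int.ediv_eq_zero_of_lt (by omega) (by omega)]
  rfl

theorem altFloorSum_of_odd {c M m : ℤ} (hc : Even c) (hc0 : 0 < c) (hcM : c ^ 2 = M + 1)
    (hm : Odd m) (hm0 : 0 < m) (hmM : m < M) : altFloorSum c M m = 1 := by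
  have hM : 0 < M := by omega
  rw [altFloorSum_eq_neg_negOnePow hc hc0 hcM hm0.le hmM (Or.inr hm),
    (Int.ediv_eq_iff_of_pos hM).2 (show 1 * M ≤ m + M - 1 ∧ m + M - 1 < 1 * M + M by omega)]
  rfl

theorem altFloorSum_add_mul {c M : ℤ} (hM : M ≠ 0) (m n : ℤ) :
    altFloorSum c M (m + M * n) = (n.negOnePow : ℤ) * altFloorSum c M m := by
  rw [altFloorSum, altFloorSum, mul_sum]
  refine sum_congr rfl fun j _ => ?_
  rw [show m + M * n + c * j = m + c * j + M * n by ring, Int.add_mul_ediv_left _ _ hM,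
    ← add_assoc, add_comm _ n, Int.negOnePow_add, Units.val_mul]

noncomputable def signSum (p q : ℤ) : ℤ := ∑ k ∈ Ico 0 p, ((q * k / p).negOnePow : ℤ)

theorem diagElem_eq_one_sub_signSum {p : ℤ} (hp : 0 < p) (q : ℤ) :
    diagElem p q = 1 - signSum p q := by
  have hfloor : ∀ k : ℤ, ⌊(q : ℚ) * (k : ℚ) / (p : ℚ)⌋ = q * k / p := by
    intro k
    lift p to ℕ using hp.le
    exact_mod_cast Rat.floor_intCast_div_natCast (q * k) p
  rw [diagElem, signSum, show Ico 0 p = insert 0 (Icc 1 (p - 1)) by ext; simp; omega,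
    sum_insert (by simp)]
  simp [hfloor]

theorem signSum_add_signSum_neg {p q : ℤ} (hp : 0 < p) (hpq : IsCoprime p q) :
    signSum p q + signSum p (-q) = 2 := by
  rw [signSum, signSum, ← sum_add_distrib, sum_eq_single 0 (fun k hk hk0 => ?_) (by simp [hp])]
  · simp
  · rw [mem_Ico] at hk
    have hndvd : ¬ p ∣ q * k := fun h =>
      absurd (Int.le_of_dvd (by omega) (hpq.dvd_of_dvd_mul_left h)) (by omega)
    rw [neg_mul, Int.neg_ediv, if_neg hndvd, Int.sign_eq_one_of_pos hp, Int.negOnePow_sub,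
      Int.negOnePow_neg, Int.negOnePow_one]
    simp

theorem mul_four_sq_sub_one_ediv {P s : ℤ} (hs : 0 < s) (hsP : s ≤ P) :
    s * (4 * P ^ 2 - 1) / P = 4 * s * P - 1 := by
  rw [Int.ediv_eq_iff_of_pos (by omega)]
  constructor <;> nlinarith

theorem sum_negOnePow_fiber_step {P Q r : ℤ} (hP : 0 < P) (hQ : Odd Q) (hPQ : IsCoprime P Q)
    (hr0 : 0 ≤ r) (hrP : r < P) :
    ∑ j ∈ Ico 0 (4 * P ^ 2 - 1),
        (((Q * (4 * P ^ 2 - 1) + 2 * P) * (r + j * P) / (P * (4 * P ^ 2 - 1))).negOnePow : ℤ)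
      = ((Q * r / P).negOnePow : ℤ) * if r = 0 then -1 else 1 := by
  set M := 4 * P ^ 2 - 1 with hM
  have hM0 : 0 < M := by nlinarith
  have hcM : (2 * P) ^ 2 = M + 1 := by ring
  have hc : Even (2 * P) := even_two_mul P
  have hsplit : Q * r * M / P = Q * r % P * M / P + M * (Q * r / P) := by
    rw [← Int.add_mul_ediv_left _ _ hP.ne']
    congr 1
    linear_combination M * (Int.emod_add_ediv_mul (Q * r) P).symm
  calc ∑ j ∈ Ico 0 M, (((Q * M + 2 * P) * (r + j * P) / (P * M)).negOnePow : ℤ)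
      = altFloorSum (2 * P) M (Q * r * M / P + 2 * r) := by
        refine sum_congr rfl fun j _ => ?_
        rw [show (Q * M + 2 * P) * (r + j * P)
              = Q * r * M + P * (2 * r + 2 * P * j) + P * M * (Q * j) by ring,
          Int.add_mul_ediv_left _ _ (by positivity), ← Int.ediv_ediv_of_nonneg hP.le,
          Int.add_mul_ediv_left _ _ hP.ne', ← add_assoc]
        congr 1
        rw [Int.negOnePow_eq_iff]
        obtain ⟨a, rfl⟩ := hQ
        exact ⟨a * j, by ring⟩
    _ = ((Q * r / P).negOnePow : ℤ) * altFloorSum (2 * P) M (Q * r % P * M / P + 2 * r) := by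
        rw [hsplit, add_right_comm, altFloorSum_add_mul hM0.ne']
    _ = ((Q * r / P).negOnePow : ℤ) * if r = 0 then -1 else 1 := by
        congr 1
        split_ifs with hr
        · subst hr
          simpa using altFloorSum_zero hc (by omega) hcM
        · have hs0 : 0 < Q * r % P := by
            refine lt_of_le_of_ne (Int.emod_nonneg _ hP.ne') fun h => ?_
            have := Int.le_of_dvd (by omega)
              (hPQ.dvd_of_dvd_mul_left (Int.dvd_of_emod_eq_zero h.symm))
            omega
          have hsP := Int.emod_lt_of_pos (Q * r) hP
          rw [mul_four_sq_sub_one_ediv hs0 hsP.le]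
          refine altFloorSum_of_odd hc (by omega) hcM ⟨2 * (Q * r % P) * P + r - 1, by ring⟩
            (by nlinarith) (by nlinarith)

theorem signSum_step_pos {P Q : ℤ} (hP : 0 < P) (hQ : Odd Q) (hPQ : IsCoprime P Q) :
    signSum (P * (4 * P ^ 2 - 1)) (Q * (4 * P ^ 2 - 1) + 2 * P) = signSum P Q - 2 := by
  calc signSum (P * (4 * P ^ 2 - 1)) (Q * (4 * P ^ 2 - 1) + 2 * P)
      = ∑ r ∈ Ico 0 P, (((Q * r / P).negOnePow : ℤ) - if r = 0 then 2 else 0) := by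
        rw [signSum, sum_Ico_mul_eq_sum_sum _ hP]
        refine sum_congr rfl fun r hr => ?_
        rw [sum_negOnePow_fiber_step hP hQ hPQ (mem_Ico.1 hr).1 (mem_Ico.1 hr).2]
        split_ifs with h <;> simp [h]
    _ = signSum P Q - 2 := by rw [sum_sub_distrib, sum_ite_eq', if_pos (by simp [hP]), signSum]

theorem isCoprime_step {P Q δ : ℤ} (hPQ : IsCoprime P Q) (hδ : δ ^ 2 = 1) :
    IsCoprime (P * (4 * P ^ 2 - 1)) (Q * (4 * P ^ 2 - 1) + 2 * δ * P) := by
  have hPM : IsCoprime P (4 * P ^ 2 - 1) := ⟨4 * P, -1, by ring⟩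
  have hMδ : IsCoprime (4 * P ^ 2 - 1) (2 * δ * P) :=
    ⟨-1, 2 * δ * P, by linear_combination 4 * P ^ 2 * hδ⟩
  refine IsCoprime.mul_left ?_ ?_
  · simpa [mul_comm] using (hPQ.mul_right hPM).add_mul_left_right (2 * δ)
  · simpa [add_comm, mul_comm] using hMδ.add_mul_left_right Q

theorem signSum_step {P Q δ : ℤ} (hP : 0 < P) (hQ : Odd Q) (hPQ : IsCoprime P Q)
    (hδ : δ = 1 ∨ δ = -1) :
    signSum (P * (4 * P ^ 2 - 1)) (Q * (4 * P ^ 2 - 1) + 2 * δ * P) = signSum P Q - 2 * δ := by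
  rcases hδ with rfl | rfl
  · simpa using signSum_step_pos hP hQ hPQ
  · have hPM : 0 < P * (4 * P ^ 2 - 1) := mul_pos hP (by nlinarith)
    have h₁ := signSum_add_signSum_neg hPM (isCoprime_step hPQ (δ := -1) (by norm_num))
    have h₂ := signSum_step_pos hP hQ.neg hPQ.neg_right
    have h₃ := signSum_add_signSum_neg hP hPQ
    rw [show -(Q * (4 * P ^ 2 - 1) + 2 * -1 * P) = -Q * (4 * P ^ 2 - 1) + 2 * P by ring] at h₁
    linarith

theorem signSum_pSeq_neg_q'Seq (ε : ℕ → ℕ) (n : ℕ) :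
    signSum (pSeq n) (-q'Seq ε n) = 3 - 2 * ∑ j ∈ range n, (-1 : ℤ) ^ ε j := by
  induction n with
  | zero => simp only [pSeq, q'Seq, neg_neg, range_zero, sum_empty]; decide
  | succ n ih =>
    rw [pSeq, neg_q'Seq_succ, signSum_step (pSeq_pos n) (odd_neg_q'Seq ε n)
      (isCoprime_pSeq_neg_q'Seq ε n) (neg_one_pow_eq_or ℤ (ε n)), ih, sum_range_succ]
    ring

theorem diagElem_pSeq_neg_q'Seq (ε : ℕ → ℕ) (n : ℕ) :
    diagElem (pSeq n) (-q'Seq ε n) = -2 + 2 * ∑ j ∈ range n, (-1 : ℤ) ^ ε j := by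
  rw [diagElem_eq_one_sub_signSum (pSeq_pos n), signSum_pSeq_neg_q'Seq]
  ring

section Binary

variable {ε : ℕ → ℕ} (s : Finset ℕ)

theorem filter_ne_zero_eq_filter_eq_one (hε : ∀ j, ε j = 0 ∨ ε j = 1) :
    {j ∈ s | ¬ε j = 0} = {j ∈ s | ε j = 1} :=
  filter_congr fun j _ => by rcases hε j with h | h <;> simp [h]

theorem card_filter_eq_zero_add_card_filter_eq_one (hε : ∀ j, ε j = 0 ∨ ε j = 1) :
    #{j ∈ s | ε j = 0} + #{j ∈ s | ε j = 1} = #s := by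
  rw [← filter_ne_zero_eq_filter_eq_one s hε, card_filter_add_card_filter_not]

theorem sum_neg_one_pow_eq_card_sub_card (hε : ∀ j, ε j = 0 ∨ ε j = 1) :
    ∑ j ∈ s, (-1 : ℤ) ^ ε j = #{j ∈ s | ε j = 0} - #{j ∈ s | ε j = 1} := by
  have h₀ : ∀ j ∈ {j ∈ s | ε j = 0}, (-1 : ℤ) ^ ε j = 1 := fun j hj => by
    rw [(mem_filter.1 hj).2, pow_zero]
  have h₁ : ∀ j ∈ {j ∈ s | ε j = 1}, (-1 : ℤ) ^ ε j = -1 := fun j hj => by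
    rw [(mem_filter.1 hj).2, pow_one]
  rw [← sum_filter_add_sum_filter_not s (ε · = 0), filter_ne_zero_eq_filter_eq_one s hε,
    sum_congr rfl h₀, sum_congr rfl h₁]
  simp [sub_eq_add_neg]

end Binary

theorem diagElem_pSeq_neg_q'Seq_of_binary {ε : ℕ → ℕ} (hε : ∀ j, ε j = 0 ∨ ε j = 1) (n : ℕ) :
    diagElem (pSeq n) (-q'Seq ε n)
        = -2 + 2 * (#{j ∈ range n | ε j = 0} : ℤ) - 2 * (#{j ∈ range n | ε j = 1} : ℤ) ∧
      diagElem (pSeq n) (-q'Seq ε n) = 2 * (n : ℤ) - 2 - 4 * (#{j ∈ range n | ε j = 1} : ℤ) := by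
  have hcard : (#{j ∈ range n | ε j = 0} : ℤ) + #{j ∈ range n | ε j = 1} = n := by
    exact_mod_cast (card_range n) ▸ card_filter_eq_zero_add_card_filter_eq_one (range n) hε
  rw [diagElem_pSeq_neg_q'Seq, sum_neg_one_pow_eq_card_sub_card _ hε]
  constructor <;> linarith

/-- For every `n ≥ 0` and every sequence `ε : ℕ → {0,1}`,
`d(p(n), −q'_ε(n)) = −2 + 2·#{j < n : ε(j)=0} − 2·#{j < n : ε(j)=1}`; in particular
`d(p(n), −q'_ε(n)) = 2n − 2 − 4·#{j < n : ε(j)=1}`, so the set of values of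
`d(p(n), −q'_ε(n))` over all `ε` is `{2n − 2 − 4j : j = 0, 1, …, n}`. -/
theorem diagElem_closed_form (n : ℕ) :
    (∀ ε : ℕ → ℕ, (∀ j, ε j = 0 ∨ ε j = 1) →
      diagElem (pSeq n) (-(q'Seq ε n)) =
        -2 + 2 * (((Finset.range n).filter (fun j => ε j = 0)).card : ℤ)
          - 2 * (((Finset.range n).filter (fun j => ε j = 1)).card : ℤ) ∧
      diagElem (pSeq n) (-(q'Seq ε n)) =
        2 * (n : ℤ) - 2 - 4 * (((Finset.range n).filter (fun j => ε j = 1)).card : ℤ)) ∧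
    {x : ℤ | ∃ ε : ℕ → ℕ, (∀ j, ε j = 0 ∨ ε j = 1) ∧
        x = diagElem (pSeq n) (-(q'Seq ε n))} =
      {x : ℤ | ∃ j : ℕ, j ≤ n ∧ x = 2 * (n : ℤ) - 2 - 4 * (j : ℤ)} := by
  refine ⟨fun ε hε => diagElem_pSeq_neg_q'Seq_of_binary hε n, Set.ext fun x => ⟨?_, ?_⟩⟩
  · rintro ⟨ε, hε, rfl⟩
    exact ⟨_, (card_filter_le _ _).trans (card_range n).le,
      (diagElem_pSeq_neg_q'Seq_of_binary hε n).2⟩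
  · rintro ⟨j, hj, rfl⟩
    have hε : ∀ i, (if i < j then 1 else 0) = 0 ∨ (if i < j then 1 else 0) = 1 := fun i => by
      by_cases h : i < j <;> simp [h]
    have hfilter : {i ∈ range n | (if i < j then 1 else 0) = 1} = range j := by
      ext i
      by_cases h : i < j
      · simp [h]; omega
      · simp [h]
    exact ⟨_, hε, by rw [(diagElem_pSeq_neg_q'Seq_of_binary hε n).2, hfilter, card_range]⟩
end
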